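/- For the n-dimensional lattice Laplacian, the spectral mass M(λ) = vol{ξ ∈ [−1/2,1/2]ⁿ : Σᵢ 4 sin²(πξᵢ) ≤ λ} satisfies M(λ)/λ^{n/2} → c_n as λ → 0⁺, where c_n = b_n/(2π)ⁿ and b_n is the volume of the unit ball in ℝⁿ. -/

import Mathlib

open MeasureTheory Real Filter

/-!
Near `ξ = 0` the symbol `∑ 4 sin² (π ξᵢ)` is comparable to `4π² ‖ξ‖²`. Since `sin² t ≤ t²`, the
ball `4π² ‖ξ‖² ≤ λ` lies in the sublevel set. Conversely, on the cube `tan t ≥ t` gives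
`sin² t ≥ t² cos² t = t² (1 - sin² t)`, and each term `sin² (π ξᵢ)` is at most `λ / 4`, so the
sublevel set lies in the ball `4π² (1 - λ/4) ‖ξ‖² ≤ λ`. Both balls have volume
`b_n λ^{n/2} / (2π)ⁿ` up to the factor `(1 - λ/4)^{-n/2} → 1`, which squeezes `M(λ) / λ^{n/2}`.
-/

section EuclideanBall

variable {ι : Type*} [Fintype ι]

lemma toLp_preimage_closedBall_zero {r : ℝ} (hr : 0 ≤ r) :
    WithLp.toLp 2 ⁻¹' Metric.closedBall (0 : EuclideanSpace ℝ ι) r =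
      {ξ : ι → ℝ | ∑ i, ξ i ^ 2 ≤ r ^ 2} := by
  ext ξ
  simp [EuclideanSpace.norm_eq, Real.sqrt_le_left, hr]

lemma volume_setOf_sum_sq_le {r : ℝ} (hr : 0 ≤ r) :
    volume {ξ : ι → ℝ | ∑ i, ξ i ^ 2 ≤ r ^ 2} =
      ENNReal.ofReal (r ^ Fintype.card ι) * volume (Metric.ball (0 : EuclideanSpace ℝ ι) 1) := by
  rw [← toLp_preimage_closedBall_zero hr,
    (PiLp.volume_preserving_toLp ι).measure_preimage measurableSet_closedBall.nullMeasurableSet,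
    Measure.addHaar_closedBall _ _ hr, finrank_euclideanSpace]

end EuclideanBall

lemma sq_mul_cos_sq_le_sin_sq {t : ℝ} (ht : |t| ≤ π / 2) : t ^ 2 * cos t ^ 2 ≤ sin t ^ 2 := by
  wlog h0 : 0 ≤ t generalizing t
  · simpa using this (t := -t) (by rwa [abs_neg]) (by linarith)
  rcases (abs_le.1 ht).2.lt_or_eq with hlt | rfl
  · have htan := le_tan h0 hlt
    have hcos : 0 < cos t := cos_pos_of_mem_Ioo ⟨by linarith [pi_pos], hlt⟩
    rw [tan_eq_sin_div_cos, le_div_iff₀ hcos] at htan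
    rw [← mul_pow]
    exact pow_le_pow_left₀ (by positivity) htan 2
  · simp

lemma sqrt_div_pow_mul_eq {lam c : ℝ} (hlam : 0 ≤ lam) (n : ℕ) (B : ℝ) :
    (√lam / c) ^ n * B = B / c ^ n * lam ^ ((n : ℝ) / 2) := by
  rw [rpow_div_two_eq_sqrt _ hlam, rpow_natCast, div_pow]
  ring

def spectralSublevel (ι : Type*) [Fintype ι] (lam : ℝ) : Set (ι → ℝ) :=
  {ξ | (∀ i, ξ i ∈ Set.Icc (-(1/2) : ℝ) (1/2)) ∧ ∑ i, 4 * Real.sin (π * ξ i) ^ 2 ≤ lam}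

section SpectralSublevel

variable {ι : Type*} [Fintype ι]

lemma volume_spectralSublevel_lt_top (lam : ℝ) : volume (spectralSublevel ι lam) < ⊤ :=
  ((Metric.isBounded_Icc (-(1/2) : ι → ℝ) (1/2)).subset
    fun _ hξ => ⟨fun i => (hξ.1 i).1, fun i => (hξ.1 i).2⟩).measure_lt_top

lemma setOf_sum_sq_le_subset_spectralSublevel {lam r : ℝ} (hr : 4 * π ^ 2 * r ^ 2 ≤ lam)
    (hlam : lam ≤ π ^ 2) : {ξ : ι → ℝ | ∑ i, ξ i ^ 2 ≤ r ^ 2} ⊆ spectralSublevel ι lam := by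
  intro ξ (hξ : ∑ i, ξ i ^ 2 ≤ r ^ 2)
  have hπ := pi_pos
  refine ⟨fun i => ?_, ?_⟩
  · have hi : ξ i ^ 2 ≤ r ^ 2 :=
      (Finset.single_le_sum (fun j _ => sq_nonneg (ξ j)) (Finset.mem_univ i)).trans hξ
    have hr' : π ^ 2 * (4 * r ^ 2) ≤ π ^ 2 * 1 := by linarith
    have : ξ i ^ 2 ≤ (1 / 2) ^ 2 := by nlinarith [le_of_mul_le_mul_left hr' (by positivity)]
    exact abs_le_of_sq_le_sq' this (by norm_num)
  · calc ∑ i, 4 * sin (π * ξ i) ^ 2 ≤ ∑ i, 4 * π ^ 2 * ξ i ^ 2 :=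
          Finset.sum_le_sum fun i _ => by nlinarith [sin_sq_le_sq (x := π * ξ i)]
      _ = 4 * π ^ 2 * ∑ i, ξ i ^ 2 := by rw [Finset.mul_sum]
      _ ≤ 4 * π ^ 2 * r ^ 2 := by gcongr
      _ ≤ lam := hr

lemma spectralSublevel_subset_setOf_sum_sq_le {lam r : ℝ}
    (hr : lam ≤ 4 * π ^ 2 * (1 - lam / 4) * r ^ 2) :
    spectralSublevel ι lam ⊆ {ξ : ι → ℝ | ∑ i, ξ i ^ 2 ≤ r ^ 2} := by
  rintro ξ ⟨hbox, hsum⟩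
  have hπ := pi_pos
  have hterm : ∀ i, 4 * π ^ 2 * (1 - lam / 4) * ξ i ^ 2 ≤ 4 * sin (π * ξ i) ^ 2 := by
    intro i
    have hi : 4 * sin (π * ξ i) ^ 2 ≤ lam :=
      (Finset.single_le_sum (f := fun j => 4 * sin (π * ξ j) ^ 2) (fun j _ => by positivity)
        (Finset.mem_univ i)).trans hsum
    have hcos := sq_mul_cos_sq_le_sin_sq (t := π * ξ i) (by
      rw [abs_mul, abs_of_pos hπ]
      nlinarith [abs_le.2 (hbox i)])
    nlinarith [sin_sq_add_cos_sq (π * ξ i), sq_nonneg (π * ξ i)]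
  have hκ : 0 < 4 * π ^ 2 * (1 - lam / 4) := by
    by_contra! h
    nlinarith [mul_nonpos_of_nonpos_of_nonneg h (sq_nonneg r)]
  refine le_of_mul_le_mul_left ?_ hκ
  calc 4 * π ^ 2 * (1 - lam / 4) * ∑ i, ξ i ^ 2
      = ∑ i, 4 * π ^ 2 * (1 - lam / 4) * ξ i ^ 2 := by rw [Finset.mul_sum]
    _ ≤ ∑ i, 4 * sin (π * ξ i) ^ 2 := Finset.sum_le_sum fun i _ => hterm i
    _ ≤ lam := hsum
    _ ≤ 4 * π ^ 2 * (1 - lam / 4) * r ^ 2 := hr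

lemma mul_rpow_le_volume_spectralSublevel {lam : ℝ} (h0 : 0 ≤ lam) (hlam : lam ≤ π ^ 2) :
    (volume (Metric.ball (0 : EuclideanSpace ℝ ι) 1)).toReal / (2 * π) ^ Fintype.card ι *
        lam ^ ((Fintype.card ι : ℝ) / 2) ≤ (volume (spectralSublevel ι lam)).toReal := by
  have hr : 0 ≤ √lam / (2 * π) := by positivity
  rw [← sqrt_div_pow_mul_eq h0, ← ENNReal.toReal_ofReal (pow_nonneg hr _), ← ENNReal.toReal_mul,
    ← volume_setOf_sum_sq_le hr]
  refine ENNReal.toReal_mono (volume_spectralSublevel_lt_top lam).ne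
    (measure_mono (setOf_sum_sq_le_subset_spectralSublevel (le_of_eq ?_) hlam))
  rw [div_pow, sq_sqrt h0]
  field_simp
  ring

lemma volume_spectralSublevel_le_mul_rpow {lam : ℝ} (h0 : 0 ≤ lam) (h4 : lam < 4) :
    (volume (spectralSublevel ι lam)).toReal ≤
      (volume (Metric.ball (0 : EuclideanSpace ℝ ι) 1)).toReal /
        (2 * π * √(1 - lam / 4)) ^ Fintype.card ι * lam ^ ((Fintype.card ι : ℝ) / 2) := by
  have hκ : 0 < 1 - lam / 4 := by linarith
  have hr : 0 ≤ √lam / (2 * π * √(1 - lam / 4)) := by positivity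
  rw [← sqrt_div_pow_mul_eq h0, ← ENNReal.toReal_ofReal (pow_nonneg hr _), ← ENNReal.toReal_mul,
    ← volume_setOf_sum_sq_le hr]
  refine ENNReal.toReal_mono (by rw [volume_setOf_sum_sq_le hr]; finiteness)
    (measure_mono (spectralSublevel_subset_setOf_sum_sq_le (le_of_eq ?_)))
  rw [div_pow, mul_pow, sq_sqrt h0, sq_sqrt hκ.le, mul_div_assoc', eq_div_iff (by positivity)]
  ring

end SpectralSublevel

theorem lattice_spectral_mass_dim_n_general (n : ℕ) :
    Tendsto
      (fun lam : ℝ =>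
        (volume {ξ : Fin n → ℝ | (∀ i, ξ i ∈ Set.Icc (-(1/2) : ℝ) (1/2)) ∧
            ∑ i, 4 * Real.sin (π * ξ i) ^ 2 ≤ lam}).toReal / lam ^ ((n : ℝ) / 2))
      (nhdsWithin 0 (Set.Ioi 0))
      (nhds ((volume (Metric.ball (0 : EuclideanSpace ℝ (Fin n)) 1)).toReal / (2 * π) ^ n)) := by
  set B := (volume (Metric.ball (0 : EuclideanSpace ℝ (Fin n)) 1)).toReal
  have hupper : Tendsto (fun lam : ℝ => B / (2 * π * √(1 - lam / 4)) ^ n)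
      (nhdsWithin 0 (Set.Ioi 0)) (nhds (B / (2 * π) ^ n)) := by
    have : ContinuousAt (fun lam : ℝ => B / (2 * π * √(1 - lam / 4)) ^ n) 0 :=
      continuousAt_const.div (by fun_prop) (by simp [pi_ne_zero])
    simpa using this.tendsto.mono_left nhdsWithin_le_nhds
  refine tendsto_of_tendsto_of_tendsto_of_le_of_le' tendsto_const_nhds hupper ?_ ?_ <;>
    filter_upwards [Ioo_mem_nhdsGT one_pos] with lam ⟨h0, h1⟩
  · rw [le_div_iff₀ (by positivity)]
    have := mul_rpow_le_volume_spectralSublevel (ι := Fin n) h0.le (by nlinarith [pi_gt_three])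
    rwa [Fintype.card_fin] at this
  · rw [div_le_iff₀ (by positivity)]
    have := volume_spectralSublevel_le_mul_rpow (ι := Fin n) h0.le (by linarith)
    rwa [Fintype.card_fin] at this

/-- Weyl asymptotics at the bottom of the spectrum for the lattice Laplacian on ℤⁿ:
the spectral mass `M(λ)` (volume of the sublevel set of the symbol) satisfies
`M(λ)/λ^{n/2} → c_n = b_n/(2π)ⁿ` as `λ → 0⁺`. -/
theorem lattice_spectral_mass_dim_n (n : ℕ) (hn : 0 < n) :
    Tendsto
      (fun lam : ℝ =>
        (volume {ξ : Fin n → ℝ | (∀ i, ξ i ∈ Set.Icc (-(1/2) : ℝ) (1/2)) ∧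
            ∑ i, 4 * Real.sin (π * ξ i) ^ 2 ≤ lam}).toReal / lam ^ ((n : ℝ) / 2))
      (nhdsWithin 0 (Set.Ioi 0))
      (nhds ((volume (Metric.ball (0 : EuclideanSpace ℝ (Fin n)) 1)).toReal / (2 * π) ^ n)) :=
  lattice_spectral_mass_dim_n_general n
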